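/- arXiv:0708.0893 — 5 statements merged into one kernel-verified Lean document; each statement's English description precedes it below -/
import Mathlib

section
/- Let (X, μ) be a measure space and let 1 ≤ q < p < ∞ be real numbers. Let u : X → ℝ be a measurable function such that ∫_X |u|^q dμ = 1, |u|^p is integrable, and the function x ↦ |u(x)|^q · log(u(x)²) is integrable. Then ∫_X |u|^q log(u²) dμ ≤ (2p/(p−q)) · log( (∫_X |u|^p dμ)^{1/p} ). -/
/-!
Concavity of the logarithm enters only through its tangent line at `s = ∫ |u|^p`:
`log t ≤ log s + t / s - 1`. Applied to `t = |u|^(p-q)` and multiplied by `|u|^q`, this bounds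
`|u|^q log(u²)` pointwise by a combination of `|u|^q` and `|u|^p`; integrating, with
`∫ |u|^q = 1`, the right-hand side collapses to `(2/(p-q)) log s`.
-/

open MeasureTheory Real

namespace Real

theorem log_le_log_add_div_sub_one {s t : ℝ} (hs : 0 < s) (ht : 0 < t) :
    log t ≤ log s + t / s - 1 := by
  have h := log_le_sub_one_of_pos (div_pos ht hs)
  rw [log_div ht.ne' hs.ne'] at h
  linarith

theorem rpow_mul_log_rpow_le {a s : ℝ} (ha : 0 < a) (hs : 0 < s) (q r : ℝ) :
    a ^ q * log (a ^ r) ≤ (log s - 1) * a ^ q + a ^ (q + r) / s := by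
  calc a ^ q * log (a ^ r) ≤ a ^ q * (log s + a ^ r / s - 1) :=
        mul_le_mul_of_nonneg_left (log_le_log_add_div_sub_one hs (rpow_pos_of_pos ha r))
          (rpow_pos_of_pos ha q).le
    _ = (log s - 1) * a ^ q + a ^ (q + r) / s := by rw [rpow_add ha]; ring

theorem rpow_abs_mul_log_sq_le {p q s : ℝ} (hq : 0 < q) (hqp : q < p) (hs : 0 < s) (x : ℝ) :
    |x| ^ q * log (x ^ 2) ≤ 2 / (p - q) * ((log s - 1) * |x| ^ q + |x| ^ p / s) := by
  rcases eq_or_ne x 0 with rfl | hx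
  · simp [zero_rpow hq.ne', zero_rpow (hq.trans hqp).ne']
  have ha : 0 < |x| := abs_pos.mpr hx
  have hpq : 0 < p - q := sub_pos.mpr hqp
  have hlog : log (x ^ 2) = 2 / (p - q) * log (|x| ^ (p - q)) := by
    rw [log_rpow ha, ← sq_abs, log_pow]
    field_simp
    push_cast
    ring
  have key := rpow_mul_log_rpow_le ha hs q (p - q)
  rw [add_sub_cancel] at key
  rw [hlog, mul_left_comm]
  exact mul_le_mul_of_nonneg_left key (by positivity)

end Real

theorem integral_rpow_abs_pos {X : Type*} [MeasurableSpace X] {μ : Measure X} {p q : ℝ}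
    (hp : p ≠ 0) (hq : q ≠ 0) {u : X → ℝ} (hup : Integrable (fun x => |u x| ^ p) μ)
    (hq_ne : ∫ x, |u x| ^ q ∂μ ≠ 0) : 0 < ∫ x, |u x| ^ p ∂μ := by
  refine (integral_nonneg fun x => rpow_nonneg (abs_nonneg _) _).lt_of_ne fun h => hq_ne ?_
  have hzero := (integral_eq_zero_iff_of_nonneg
    (fun x => rpow_nonneg (abs_nonneg (u x)) p) hup).mp h.symm
  refine integral_eq_zero_of_ae ?_
  filter_upwards [hzero] with x hx
  rw [Pi.zero_apply, rpow_eq_zero (abs_nonneg _) hp] at hx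
  simp [hx, zero_rpow hq]

theorem jensen_log_step_general {X : Type*} [MeasurableSpace X] (μ : Measure X)
    (q p : ℝ) (hq : 1 ≤ q) (hqp : q < p)
    (u : X → ℝ)
    (hnorm : ∫ x, |u x| ^ q ∂μ = 1)
    (hup : Integrable (fun x => |u x| ^ p) μ)
    (hlog : Integrable (fun x => |u x| ^ q * Real.log ((u x) ^ 2)) μ) :
    ∫ x, |u x| ^ q * Real.log ((u x) ^ 2) ∂μ ≤
      (2 * p / (p - q)) * Real.log ((∫ x, |u x| ^ p ∂μ) ^ (1 / p)) := by
  have hq0 : 0 < q := one_pos.trans_le hq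
  have hp0 : 0 < p := hq0.trans hqp
  have huq : Integrable (fun x => |u x| ^ q) μ := .of_integral_ne_zero (by simp [hnorm])
  set s := ∫ x, |u x| ^ p ∂μ
  have hs : 0 < s := integral_rpow_abs_pos hp0.ne' hq0.ne' hup (by simp [hnorm])
  have hbound : Integrable (fun x => 2 / (p - q) * ((log s - 1) * |u x| ^ q + |u x| ^ p / s)) μ :=
    ((huq.const_mul _).add (hup.div_const _)).const_mul _
  calc ∫ x, |u x| ^ q * log (u x ^ 2) ∂μ
      ≤ ∫ x, 2 / (p - q) * ((log s - 1) * |u x| ^ q + |u x| ^ p / s) ∂μ :=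
        integral_mono hlog hbound fun x => rpow_abs_mul_log_sq_le hq0 hqp hs (u x)
    _ = 2 / (p - q) * ((log s - 1) * 1 + s / s) := by
        rw [integral_const_mul, integral_add (huq.const_mul _) (hup.div_const _),
          integral_const_mul, integral_div, hnorm]
    _ = 2 * p / (p - q) * log (s ^ (1 / p)) := by
        rw [div_self hs.ne', log_rpow hs]
        field_simp
        ring

/-- Jensen-inequality step: if `∫ |u|^q = 1` then
`∫ |u|^q log(u²) ≤ (2p/(p-q)) log((∫ |u|^p)^(1/p))`. -/
theorem jensen_log_step {X : Type*} [MeasurableSpace X] (μ : Measure X)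
    (q p : ℝ) (hq : 1 ≤ q) (hqp : q < p)
    (u : X → ℝ) (hu : Measurable u)
    (hnorm : ∫ x, |u x| ^ q ∂μ = 1)
    (hup : Integrable (fun x => |u x| ^ p) μ)
    (hlog : Integrable (fun x => |u x| ^ q * Real.log ((u x) ^ 2)) μ) :
    ∫ x, |u x| ^ q * Real.log ((u x) ^ 2) ∂μ ≤
      (2 * p / (p - q)) * Real.log ((∫ x, |u x| ^ p ∂μ) ^ (1 / p)) :=
  jensen_log_step_general μ q p hq hqp u hnorm hup hlog
end

section
/- Let n ≥ 2 be an integer and let 1 ≤ q < n and p be real numbers satisfying 1/p = 1/q − 1/n. There exists a constant C > 0 depending only on n and q such that for every continuously differentiable, compactly supported function u : ℝⁿ → ℝ with (∫_{ℝⁿ} |u|^q dx)^{1/q} = 1, one has ∫_{ℝⁿ} |u|^q log(u²) dx ≤ (2n/q) · log( C · (∫_{ℝⁿ} ‖∇u‖^q dx)^{1/q} ). -/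
/-!
As `‖u‖_q = 1`, `w = |u|^q` is a probability density. Jensen's inequality for
the concave `log` and the probability measure `w dx` gives
`∫ w log w^(p/q - 1) ≤ log ∫ w^(p/q) = log ∫ |u|^p`, i.e. the entropy of `|u|^q` is bounded by
`2p/(p - q) · log ‖u‖_p`, and `2p/(p - q) = 2n/q` precisely for the Sobolev exponent `p`. The
Gagliardo–Nirenberg–Sobolev inequality `‖u‖_p ≤ C ‖∇u‖_q` then bounds `log ‖u‖_p`.
-/

open MeasureTheory Real Module

theorem Continuous.integrable_comp_of_hasCompactSupport {X F : Type*} [TopologicalSpace X]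
    [MeasurableSpace X] [OpensMeasurableSpace X] {μ : Measure X} [IsFiniteMeasureOnCompacts μ]
    [TopologicalSpace F] [Zero F] {g : F → ℝ} {u : X → F} (hg : Continuous g) (hg0 : g 0 = 0)
    (hu : Continuous u) (h2u : HasCompactSupport u) :
    Integrable (fun x ↦ g (u x)) μ :=
  (hg.comp hu).integrable_of_hasCompactSupport (h2u.comp_left hg0)

theorem abs_rpow_mul_log_sq {q : ℝ} (hq : q ≠ 0) (t : ℝ) :
    |t| ^ q * log (t ^ 2) = 2 / q * (|t| ^ q * log (|t| ^ q)) := by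
  rcases eq_or_ne t 0 with rfl | ht
  · simp [zero_rpow hq]
  rw [log_rpow (abs_pos.mpr ht), ← log_abs, abs_pow, log_pow]
  field_simp
  push_cast
  ring

theorem sub_one_mul_mul_log_le {A w r : ℝ} (hA : 0 < A) (hw : 0 ≤ w) (hr : r ≠ 0) :
    (r - 1) * (w * log w) ≤ w ^ r / A + (log A - 1) * w := by
  rcases hw.eq_or_lt with rfl | hw
  · simp [zero_rpow hr]
  -- the tangent line of `log` at `A`, evaluated at `w ^ (r - 1)` and weighted by `w`
  have tangent := log_le_sub_one_of_pos (div_pos (rpow_pos_of_pos hw (r - 1)) hA)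
  rw [log_div (rpow_pos_of_pos hw _).ne' hA.ne', log_rpow hw] at tangent
  have hwr : w * w ^ (r - 1) = w ^ r := by
    rw [mul_comm, ← rpow_add_one hw.ne']
    ring_nf
  rw [← hwr]
  linear_combination mul_le_mul_of_nonneg_left tangent hw.le

section Entropy

variable {α : Type*} [MeasurableSpace α] {μ : Measure α} {w : α → ℝ} {r : ℝ}

theorem integral_rpow_pos (hr : r ≠ 0) (hw : 0 ≤ w) (hpos : 0 < ∫ x, w x ∂μ)
    (hwr : Integrable (fun x ↦ w x ^ r) μ) :
    0 < ∫ x, w x ^ r ∂μ := by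
  have hwi : Integrable w μ := .of_integral_ne_zero hpos.ne'
  have hsupp : Function.support (fun x ↦ w x ^ r) = Function.support w := by
    ext x
    simp only [Function.mem_support, ne_eq, rpow_eq_zero (hw x) hr]
  rw [integral_pos_iff_support_of_nonneg hw hwi] at hpos
  rwa [integral_pos_iff_support_of_nonneg (fun x ↦ rpow_nonneg (hw x) r) hwr, hsupp]

theorem integral_mul_log_le_log_integral_rpow (hr : 1 < r) (hw : 0 ≤ w)
    (hw1 : ∫ x, w x ∂μ = 1) (hwr : Integrable (fun x ↦ w x ^ r) μ)
    (hwlog : Integrable (fun x ↦ w x * log (w x)) μ) :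
    ∫ x, w x * log (w x) ∂μ ≤ (r - 1)⁻¹ * log (∫ x, w x ^ r ∂μ) := by
  set A := ∫ x, w x ^ r ∂μ
  have hwi : Integrable w μ := .of_integral_ne_zero (by simp [hw1])
  have hA : 0 < A := integral_rpow_pos (by positivity) hw (by simp [hw1]) hwr
  have key : ∫ x, (r - 1) * (w x * log (w x)) ∂μ ≤ ∫ x, (w x ^ r / A + (log A - 1) * w x) ∂μ :=
    integral_mono (hwlog.const_mul _) ((hwr.div_const A).add (hwi.const_mul _))
      fun x ↦ sub_one_mul_mul_log_le hA (hw x) (by positivity)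
  rw [integral_const_mul, integral_add (hwr.div_const A) (hwi.const_mul _), integral_div,
    integral_const_mul, hw1, div_self hA.ne'] at key
  rw [le_inv_mul_iff₀ (by linarith)]
  linarith

end Entropy

theorem integral_abs_rpow_mul_log_sq_le_of_rpow_integral_le {X : Type*} [TopologicalSpace X]
    [MeasurableSpace X] [OpensMeasurableSpace X] {μ : Measure X} [IsFiniteMeasureOnCompacts μ]
    {f : X → ℝ} (hf : Continuous f) (h2f : HasCompactSupport f) {q p B : ℝ} (hq : 0 < q)
    (hqp : q < p) (hf1 : ∫ x, |f x| ^ q ∂μ = 1) (hB : (∫ x, |f x| ^ p ∂μ) ^ p⁻¹ ≤ B) :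
    ∫ x, |f x| ^ q * log (f x ^ 2) ∂μ ≤ 2 * p / (p - q) * log B := by
  have hp : 0 < p := hq.trans hqp
  have hpq : 0 < p - q := sub_pos.mpr hqp
  have hr : 1 < p / q := (one_lt_div hq).mpr hqp
  have hwr : ∀ x, (|f x| ^ q) ^ (p / q) = |f x| ^ p := fun x ↦ by
    rw [← rpow_mul (abs_nonneg _), mul_div_cancel₀ _ hq.ne']
  have hwr_int : Integrable (fun x ↦ (|f x| ^ q) ^ (p / q)) μ :=
    Continuous.integrable_comp_of_hasCompactSupport (g := fun t ↦ (|t| ^ q) ^ (p / q))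
      (by fun_prop (disch := positivity)) (by simp [zero_rpow, hq.ne', hp.ne']) hf h2f
  have hwlog_int : Integrable (fun x ↦ |f x| ^ q * log (|f x| ^ q)) μ :=
    Continuous.integrable_comp_of_hasCompactSupport (g := fun t ↦ |t| ^ q * log (|t| ^ q))
      (continuous_mul_log.comp (by fun_prop (disch := positivity))) (by simp [zero_rpow, hq.ne'])
      hf h2f
  have hA : 0 < ∫ x, |f x| ^ p ∂μ := by
    simpa only [hwr] using integral_rpow_pos (by positivity) (fun x ↦ by positivity) (by simp [hf1])
      hwr_int
  have hent := integral_mul_log_le_log_integral_rpow hr (fun x ↦ by positivity) hf1 hwr_int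
    hwlog_int
  simp only [hwr] at hent
  calc ∫ x, |f x| ^ q * log (f x ^ 2) ∂μ = 2 / q * ∫ x, |f x| ^ q * log (|f x| ^ q) ∂μ := by
        simp_rw [abs_rpow_mul_log_sq hq.ne']
        exact integral_const_mul _ _
    _ ≤ 2 / q * ((p / q - 1)⁻¹ * log (∫ x, |f x| ^ p ∂μ)) := by gcongr
    _ = 2 * p / (p - q) * log ((∫ x, |f x| ^ p ∂μ) ^ p⁻¹) := by
        rw [log_rpow hA]
        field_simp
    _ ≤ 2 * p / (p - q) * log B := by gcongr

theorem lt_of_inv_eq_inv_sub_inv {q p n : ℝ} (hq : 0 < q) (hqn : q < n)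
    (hp : p⁻¹ = q⁻¹ - n⁻¹) : q < p := by
  have hp0 : 0 < p⁻¹ := by rw [hp, sub_pos]; exact inv_strictAnti₀ hq hqn
  refine (inv_lt_inv₀ (inv_pos.mp hp0) hq).mp ?_
  rw [hp, sub_lt_self_iff]
  exact inv_pos.mpr (hq.trans hqn)

theorem rpow_integral_norm_rpow_le_of_eq_inner {E F : Type*} [NormedAddCommGroup E]
    [NormedSpace ℝ E] [MeasurableSpace E] [BorelSpace E] [FiniteDimensional ℝ E] (μ : Measure E)
    [μ.IsAddHaarMeasure] [NormedAddCommGroup F] [InnerProductSpace ℝ F] {u : E → F}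
    (hu : ContDiff ℝ 1 u) (h2u : HasCompactSupport u) {q p : ℝ} (hq : 1 ≤ q)
    (hqn : q < finrank ℝ E) (hp : p⁻¹ = q⁻¹ - (finrank ℝ E : ℝ)⁻¹) :
    (∫ x, ‖u x‖ ^ p ∂μ) ^ p⁻¹ ≤
      eLpNormLESNormFDerivOfEqInnerConst μ q * (∫ x, ‖fderiv ℝ u x‖ ^ q ∂μ) ^ q⁻¹ := by
  have hq0 : 0 < q := by linarith
  have hp0 : 0 < p := hq0.trans (lt_of_inv_eq_inv_sub_inv hq0 hqn hp)
  have hfd : Continuous (fderiv ℝ u) := hu.continuous_fderiv one_ne_zero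
  have sob := eLpNorm_le_eLpNorm_fderiv_of_eq_inner μ hu h2u (p := q.toNNReal) (p' := p.toNNReal)
    (by simpa using hq) (by exact_mod_cast hq0.trans hqn)
    (by rwa [coe_toNNReal _ hp0.le, NNReal.coe_inv, coe_toNNReal _ hq0.le])
  rw [(hu.continuous.memLp_of_hasCompactSupport h2u).eLpNorm_eq_integral_rpow_norm
      (by simpa using hp0) ENNReal.coe_ne_top,
    (hfd.memLp_of_hasCompactSupport (h2u.fderiv ℝ)).eLpNorm_eq_integral_rpow_norm
      (by simpa using hq0) ENNReal.coe_ne_top] at sob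
  simp only [ENNReal.coe_toReal, coe_toNNReal _ hp0.le, coe_toNNReal _ hq0.le] at sob
  rwa [← ENNReal.ofReal_coe_nnreal, ← ENNReal.ofReal_mul (by positivity),
    ENNReal.ofReal_le_ofReal_iff (by positivity)] at sob

theorem logSobolev_of_sobolev_general (n : ℕ) (q p : ℝ)
    (hq : 1 ≤ q) (hqn : q < n) (hp : 1 / p = 1 / q - 1 / (n : ℝ)) :
    ∃ C > 0, ∀ u : EuclideanSpace ℝ (Fin n) → ℝ,
      ContDiff ℝ 1 u → HasCompactSupport u →
      (∫ x, |u x| ^ q) ^ (1 / q) = 1 →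
      ∫ x, |u x| ^ q * Real.log ((u x) ^ 2) ≤
        (2 * n / q) * Real.log (C * (∫ x, ‖fderiv ℝ u x‖ ^ q) ^ (1 / q)) := by
  simp only [one_div] at hp ⊢
  have hq0 : 0 < q := by linarith
  have hqp : q < p := lt_of_inv_eq_inv_sub_inv hq0 hqn hp
  have hexp : 2 * p / (p - q) = 2 * n / q := by
    have hn0 : (n : ℝ) ≠ 0 := by linarith
    have hp0 : p ≠ 0 := by linarith
    rw [div_eq_div_iff (sub_pos.mpr hqp).ne' hq0.ne']
    field_simp at hp
    linarith
  have hdim : (finrank ℝ (EuclideanSpace ℝ (Fin n)) : ℝ) = n := by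
    rw [finrank_euclideanSpace_fin]
  set C := eLpNormLESNormFDerivOfEqInnerConst (volume : Measure (EuclideanSpace ℝ (Fin n))) q
  refine ⟨C + 1, by positivity, fun u hu h2u hnorm ↦ ?_⟩
  have hu1 : ∫ x, |u x| ^ q = 1 := by
    rwa [rpow_inv_eq (integral_nonneg fun x ↦ by positivity) zero_le_one hq0.ne', one_rpow]
      at hnorm
  have hsob := rpow_integral_norm_rpow_le_of_eq_inner volume hu h2u hq (hdim ▸ hqn) (hdim ▸ hp)
  simp only [Real.norm_eq_abs] at hsob
  rw [← hexp]
  exact integral_abs_rpow_mul_log_sq_le_of_rpow_integral_le hu.continuous h2u hq0 hqp hu1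
    (hsob.trans (by gcongr; exact le_add_of_nonneg_right zero_le_one))

/-- Euclidean logarithmic Sobolev inequality derived from the Sobolev
inequality: for `1 ≤ q < n`, `1/p = 1/q - 1/n`, there is `C > 0` (depending
only on `n` and `q`) such that every `C¹` compactly supported `u : ℝⁿ → ℝ`
with `‖u‖_q = 1` satisfies
`∫ |u|^q log(u²) ≤ (2n/q) log(C (∫ ‖∇u‖^q)^(1/q))`. -/
theorem logSobolev_of_sobolev (n : ℕ) (hn : 2 ≤ n) (q p : ℝ)
    (hq : 1 ≤ q) (hqn : q < n) (hp : 1 / p = 1 / q - 1 / (n : ℝ)) :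
    ∃ C > 0, ∀ u : EuclideanSpace ℝ (Fin n) → ℝ,
      ContDiff ℝ 1 u → HasCompactSupport u →
      (∫ x, |u x| ^ q) ^ (1 / q) = 1 →
      ∫ x, |u x| ^ q * Real.log ((u x) ^ 2) ≤
        (2 * n / q) * Real.log (C * (∫ x, ‖fderiv ℝ u x‖ ^ q) ^ (1 / q)) :=
  logSobolev_of_sobolev_general n q p hq hqn hp
end

section
/- Let n ≥ 2 be an integer and let 1 ≤ μ < 2 be a real number. There exists a constant C > 0 depending only on n and μ such that for every continuously differentiable, compactly supported function u : ℝⁿ → ℝ with ∫_{ℝⁿ} u² dx = 1 and ∇u not identically zero, one has ∫_{ℝⁿ} u² log(u²) dx ≤ n · log( C · (2/μ) · (∫_{ℝⁿ} ‖∇u‖² dx)^{1/2} ). -/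
open MeasureTheory Real
open scoped NNReal ENNReal

/-!
With `v = u²` a probability density and `p = n/(n-1)`, Jensen's inequality for `log` with respect
to `v dx` gives `∫ v log v ≤ n log ‖v‖_p`. The `L¹` Gagliardo–Nirenberg–Sobolev inequality bounds
`‖v‖_p ≤ S ‖∇v‖₁`, and since `∇v = 2u∇u`, Cauchy–Schwarz gives `‖∇v‖₁ ≤ 2 ‖u‖₂ ‖∇u‖₂ = 2 ‖∇u‖₂`.
-/

/-- `log t ≤ t - 1` at `t = a ^ (q - 1) / N`, multiplied by `a`. -/
theorem sub_one_mul_mul_log_le_s2 {a N : ℝ} (q : ℝ) (ha : 0 ≤ a) (hN : 0 < N) :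
    (q - 1) * (a * log a) ≤ a ^ q / N + a * (log N - 1) := by
  rcases ha.eq_or_lt with rfl | ha
  · simp only [log_zero, mul_zero, zero_mul]
    positivity
  have hlog : log (a ^ (q - 1) / N) ≤ a ^ (q - 1) / N - 1 :=
    log_le_sub_one_of_pos (by positivity)
  rw [log_div (by positivity) hN.ne', log_rpow ha] at hlog
  have hpow : a * a ^ (q - 1) = a ^ q := by
    rw [rpow_sub_one ha.ne', mul_div_cancel₀ _ ha.ne']
  calc (q - 1) * (a * log a) = a * ((q - 1) * log a - log N) + a * log N := by ring
    _ ≤ a * (a ^ (q - 1) / N - 1) + a * log N := by gcongr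
    _ = a ^ q / N + a * (log N - 1) := by rw [← hpow]; ring

section Entropy

variable {α : Type*} [MeasurableSpace α] {μ : Measure α} {f : α → ℝ} {q : ℝ}

theorem integral_rpow_pos_s2 (hq : 0 < q) (hf : 0 ≤ f) (hf1 : 0 < ∫ x, f x ∂μ)
    (hfq : Integrable (fun x => f x ^ q) μ) : 0 < ∫ x, f x ^ q ∂μ := by
  have hfi : Integrable f μ := Integrable.of_integral_ne_zero hf1.ne'
  rw [integral_pos_iff_support_of_nonneg hf hfi] at hf1
  rwa [integral_pos_iff_support_of_nonneg (fun x => rpow_nonneg (hf x) q) hfq,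
    show (Function.support fun x => f x ^ q) = Function.support f by
      ext x; simp [rpow_eq_zero (hf x) hq.ne']]

theorem integral_mul_log_le_mul_log_integral_rpow {r : ℝ} (hrq : r.HolderConjugate q)
    (hf : 0 ≤ f) (hf1 : ∫ x, f x ∂μ = 1) (hfq : Integrable (fun x => f x ^ q) μ)
    (hflog : Integrable (fun x => f x * log (f x)) μ) :
    ∫ x, f x * log (f x) ∂μ ≤ r * log ((∫ x, f x ^ q ∂μ) ^ q⁻¹) := by
  set N := ∫ x, f x ^ q ∂μ
  have hN : 0 < N := integral_rpow_pos_s2 hrq.symm.pos hf (by rw [hf1]; exact one_pos) hfq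
  have hfi : Integrable f μ := Integrable.of_integral_ne_zero (by simp [hf1])
  have hjensen : (q - 1) * ∫ x, f x * log (f x) ∂μ ≤ log N := by
    calc (q - 1) * ∫ x, f x * log (f x) ∂μ = ∫ x, (q - 1) * (f x * log (f x)) ∂μ :=
          (integral_const_mul _ _).symm
      _ ≤ ∫ x, f x ^ q / N + f x * (log N - 1) ∂μ :=
          integral_mono (hflog.const_mul _) ((hfq.div_const N).add (hfi.mul_const _))
            fun x => sub_one_mul_mul_log_le_s2 q (hf x) hN
      _ = log N := by
          rw [integral_add (hfq.div_const N) (hfi.mul_const _), integral_div, integral_mul_const,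
            hf1, div_self hN.ne']
          ring
  have hrq' : (q - 1) * r = q := hrq.symm.sub_one_mul_conj
  set I := ∫ x, f x * log (f x) ∂μ
  rw [log_rpow hN]
  calc I = r * q⁻¹ * ((q - 1) * I) := by
        rw [show r * q⁻¹ * ((q - 1) * I) = (q - 1) * r * q⁻¹ * I by ring, hrq',
          mul_inv_cancel₀ hrq.symm.ne_zero, one_mul]
    _ ≤ r * q⁻¹ * log N := by
        gcongr; exact mul_nonneg hrq.nonneg (inv_nonneg.2 hrq.symm.nonneg)
    _ = r * (q⁻¹ * log N) := by ring

end Entropy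

section Sobolev

variable {E F : Type*} [NormedAddCommGroup E] [NormedSpace ℝ E] [MeasurableSpace E] [BorelSpace E]
  [FiniteDimensional ℝ E] [NormedAddCommGroup F] [NormedSpace ℝ F]
  (μ : Measure E) [μ.IsAddHaarMeasure]

theorem integral_rpow_norm_rpow_inv_le_integral_norm_fderiv {u : E → F} (hu : ContDiff ℝ 1 u)
    (h2u : HasCompactSupport u) {p : ℝ≥0} (hp : NNReal.HolderConjugate (Module.finrank ℝ E) p) :
    (∫ x, ‖u x‖ ^ (p : ℝ) ∂μ) ^ (p : ℝ)⁻¹ ≤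
      eLpNormLESNormFDerivOneConst μ p * ∫ x, ‖fderiv ℝ u x‖ ∂μ := by
  have hp0 : (p : ℝ≥0∞) ≠ 0 := by simpa using hp.symm.ne_zero
  have hsob := eLpNorm_le_eLpNorm_fderiv_one μ hu h2u hp
  have hDu : Integrable (fderiv ℝ u) μ :=
    (hu.continuous_fderiv one_ne_zero).integrable_of_hasCompactSupport (h2u.fderiv ℝ)
  rw [(hu.continuous.memLp_of_hasCompactSupport h2u).eLpNorm_eq_integral_rpow_norm hp0
    ENNReal.coe_ne_top, eLpNorm_one_eq_lintegral_enorm,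
    ← ofReal_integral_norm_eq_lintegral_enorm hDu, ENNReal.coe_toReal, ← ENNReal.ofReal_coe_nnreal,
    ← ENNReal.ofReal_mul NNReal.zero_le_coe] at hsob
  exact (ENNReal.ofReal_le_ofReal_iff (by positivity)).1 hsob

end Sobolev

theorem norm_fderiv_sq {E : Type*} [NormedAddCommGroup E] [NormedSpace ℝ E] {u : E → ℝ} {x : E}
    (hu : DifferentiableAt ℝ u x) :
    ‖fderiv ℝ (fun x => u x ^ 2) x‖ = 2 * |u x| * ‖fderiv ℝ u x‖ := by
  rw [fderiv_fun_pow 2 hu, norm_smul]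
  simp

theorem integral_norm_fderiv_sq_le {E : Type*} [NormedAddCommGroup E] [NormedSpace ℝ E]
    [MeasurableSpace E] [OpensMeasurableSpace E] {μ : Measure E} [IsFiniteMeasureOnCompacts μ]
    {u : E → ℝ} (hu : ContDiff ℝ 1 u) (h2u : HasCompactSupport u) :
    ∫ x, ‖fderiv ℝ (fun x => u x ^ 2) x‖ ∂μ ≤
      2 * ((∫ x, u x ^ 2 ∂μ) ^ (1 / 2 : ℝ) * (∫ x, ‖fderiv ℝ u x‖ ^ (2 : ℝ) ∂μ) ^ (1 / 2 : ℝ)) := by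
  have hu2 : MemLp u (ENNReal.ofReal 2) μ := hu.continuous.memLp_of_hasCompactSupport h2u
  have hDu2 : MemLp (fderiv ℝ u) (ENNReal.ofReal 2) μ :=
    (hu.continuous_fderiv one_ne_zero).memLp_of_hasCompactSupport (h2u.fderiv ℝ)
  have hcs := integral_mul_le_Lp_mul_Lq_of_nonneg HolderConjugate.two_two
    (Filter.Eventually.of_forall fun x => abs_nonneg (u x))
    (Filter.Eventually.of_forall fun x => norm_nonneg (fderiv ℝ u x)) hu2.abs hDu2.norm
  have hsq : ∀ x, |u x| ^ (2 : ℝ) = u x ^ 2 := fun x => by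
    rw [rpow_two, sq_abs]
  simp only [hsq] at hcs
  calc ∫ x, ‖fderiv ℝ (fun x => u x ^ 2) x‖ ∂μ = 2 * ∫ x, |u x| * ‖fderiv ℝ u x‖ ∂μ := by
        rw [← integral_const_mul]
        simp only [norm_fderiv_sq (hu.differentiable one_ne_zero _), mul_assoc]
    _ ≤ _ := by gcongr

section LogSobolev

variable {E : Type*} [NormedAddCommGroup E] [NormedSpace ℝ E] [MeasurableSpace E] [BorelSpace E]
  [FiniteDimensional ℝ E] (μ : Measure E) [μ.IsAddHaarMeasure]

theorem integral_sq_mul_log_sq_le {u : E → ℝ} (hu : ContDiff ℝ 1 u) (h2u : HasCompactSupport u)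
    (hint : ∫ x, u x ^ 2 ∂μ = 1) {p : ℝ≥0} (hp : NNReal.HolderConjugate (Module.finrank ℝ E) p)
    {K : ℝ} (hK : eLpNormLESNormFDerivOneConst μ p ≤ K) :
    ∫ x, u x ^ 2 * log (u x ^ 2) ∂μ ≤
      Module.finrank ℝ E * log (K * (2 * (∫ x, ‖fderiv ℝ u x‖ ^ (2 : ℝ) ∂μ) ^ (1 / 2 : ℝ))) := by
  have hv : ContDiff ℝ 1 fun x => u x ^ 2 := hu.pow 2
  have h2v : HasCompactSupport fun x => u x ^ 2 := h2u.comp_left (zero_pow two_ne_zero)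
  have hvp : Integrable (fun x => (u x ^ 2) ^ (p : ℝ)) μ :=
    (hv.continuous.rpow_const fun _ => Or.inr p.coe_nonneg).integrable_of_hasCompactSupport
      (h2v.comp_left (g := fun t : ℝ => t ^ (p : ℝ)) (zero_rpow hp.symm.coe.ne_zero))
  have hvlog : Integrable (fun x => u x ^ 2 * log (u x ^ 2)) μ :=
    (continuous_mul_log.comp hv.continuous).integrable_of_hasCompactSupport
      (h2v.comp_left (g := fun t : ℝ => t * log t) (by simp))
  have hentropy := integral_mul_log_le_mul_log_integral_rpow (by simpa using hp.coe)
    (fun x => sq_nonneg (u x)) hint hvp hvlog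
  have hsobolev := integral_rpow_norm_rpow_inv_le_integral_norm_fderiv μ hv h2v hp
  simp only [norm_pow, norm_eq_abs, sq_abs] at hsobolev
  have hcs := integral_norm_fderiv_sq_le hu h2u (μ := μ)
  rw [hint, one_rpow, one_mul] at hcs
  have hpos : 0 < (∫ x, (u x ^ 2) ^ (p : ℝ) ∂μ) ^ (p : ℝ)⁻¹ :=
    rpow_pos_of_pos (integral_rpow_pos_s2 hp.symm.coe.pos (fun x => sq_nonneg (u x))
      (by rw [hint]; exact one_pos) hvp) _
  refine hentropy.trans (mul_le_mul_of_nonneg_left (log_le_log hpos ?_) (Nat.cast_nonneg _))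
  calc (∫ x, (u x ^ 2) ^ (p : ℝ) ∂μ) ^ (p : ℝ)⁻¹
      ≤ eLpNormLESNormFDerivOneConst μ p * ∫ x, ‖fderiv ℝ (fun x => u x ^ 2) x‖ ∂μ := hsobolev
    _ ≤ K * (2 * (∫ x, ‖fderiv ℝ u x‖ ^ (2 : ℝ) ∂μ) ^ (1 / 2 : ℝ)) :=
        mul_le_mul hK hcs (integral_nonneg fun _ => norm_nonneg _)
          ((NNReal.coe_nonneg _).trans hK)

end LogSobolev

theorem logSobolev_L2_general (n : ℕ) (hn : 2 ≤ n) (m : ℝ) (hm1 : 1 ≤ m) :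
    ∃ C > 0, ∀ u : EuclideanSpace ℝ (Fin n) → ℝ,
      ContDiff ℝ 1 u → HasCompactSupport u →
      (∫ x, (u x) ^ 2) = 1 → fderiv ℝ u ≠ 0 →
      ∫ x, (u x) ^ 2 * Real.log ((u x) ^ 2) ≤
        (n : ℝ) * Real.log (C * (2 / m) *
          (∫ x, ‖fderiv ℝ u x‖ ^ (2 : ℝ)) ^ ((1 : ℝ) / 2)) := by
  have hp : NNReal.HolderConjugate (Module.finrank ℝ (EuclideanSpace ℝ (Fin n)))
      (NNReal.conjExponent n) := by
    rw [finrank_euclideanSpace_fin]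
    exact .conjExponent (by exact_mod_cast hn)
  set S := eLpNormLESNormFDerivOneConst (volume : Measure (EuclideanSpace ℝ (Fin n)))
    (NNReal.conjExponent n)
  have hm : 0 < m := by linarith
  refine ⟨max (S : ℝ) 1 * m, by positivity, fun u hu h2u hint _ => ?_⟩
  have h := integral_sq_mul_log_sq_le volume hu h2u hint hp (le_max_left (S : ℝ) 1)
  rw [finrank_euclideanSpace_fin] at h
  convert h using 3
  field_simp

/-- `L²` logarithmic Sobolev inequality on `ℝⁿ`: for `1 ≤ μ < 2` there is
`C > 0` (depending only on `n` and `μ`) such that every `C¹` compactly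
supported `u : ℝⁿ → ℝ` with `∫ u² = 1` and `∇u` not identically zero
satisfies `∫ u² log(u²) ≤ n log(C (2/μ) (∫ ‖∇u‖²)^(1/2))`. -/
theorem logSobolev_L2 (n : ℕ) (hn : 2 ≤ n) (m : ℝ) (hm1 : 1 ≤ m) (hm2 : m < 2) :
    ∃ C > 0, ∀ u : EuclideanSpace ℝ (Fin n) → ℝ,
      ContDiff ℝ 1 u → HasCompactSupport u →
      (∫ x, (u x) ^ 2) = 1 → fderiv ℝ u ≠ 0 →
      ∫ x, (u x) ^ 2 * Real.log ((u x) ^ 2) ≤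
        (n : ℝ) * Real.log (C * (2 / m) *
          (∫ x, ‖fderiv ℝ u x‖ ^ (2 : ℝ)) ^ ((1 : ℝ) / 2)) :=
  logSobolev_L2_general n hn m hm1
end

section
/- Let (X, μ) be a σ-finite measure space, let n > 0 and 1 < q < n be real numbers, and let p satisfy 1/p = 1/q − 1/n. Let (T_t)_{t>0} be a family of linear operators defined on L^q(μ) with values in measurable functions on X such that: (i) T_{t+s} u = T_s(T_t u) for all s, t > 0 and u ∈ L^q(μ); (ii) ‖T_t u‖_{L^q(μ)} ≤ ‖u‖_{L^q(μ)} for all t > 0 and u ∈ L^q(μ); (iii) there is c > 0 with ‖T_t u‖_{L^∞(μ)} ≤ c t^{−n/(2q)} ‖u‖_{L^q(μ)} for all t > 0 and u ∈ L^q(μ); and (iv) for each u ∈ L^q(μ) the map (t, x) ↦ (T_t u)(x) admits a jointly measurable representative for which the function x ↦ ∫_0^∞ t^{−1/2} (T_t u)(x) dt is defined μ-a.e. (the integral converging absolutely μ-a.e.), defining an operator S u(x) = ∫_0^∞ t^{−1/2} (T_t u)(x) dt. Then there exists a constant C > 0, depending only on c, n and q, such that for every u ∈ L^q(μ) with u ≠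 0 and every λ > 0, μ({x ∈ X : |Su(x)| > λ}) ≤ (C ‖u‖_{L^q(μ)} / λ)^p. -/
/-!
Split `S u = ∫_0^τ + ∫_τ^∞`. By the ultracontractive bound the tail is pointwise at most
`c ‖u‖_q τ^(-γ) / γ` with `γ = (n - q) / (2q) > 0`, and `τ` is chosen to make this `λ / 2`.
On `(0, τ]` the weight `t^(-1/2) dt` is a finite measure of mass `2 √τ`, so Jensen's inequality
and Tonelli turn the `L^q` contractivity of `T_t` into `‖∫_0^τ t^(-1/2) T_t u dt‖_q ≤ 2 √τ ‖u‖_q`.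
Chebyshev's inequality for the head then gives `μ {|S u| > λ} ≤ (4 √τ ‖u‖_q / λ)^q`, which for
this `τ` is `(C ‖u‖_q / λ)^p`.
-/

open MeasureTheory Real Set Function
open scoped ENNReal

universe u

section

variable {β X E : Type*} [MeasurableSpace β] [MeasurableSpace X] [NormedAddCommGroup E]
  {ν : Measure β} {μ : Measure X} {p : ℝ≥0∞}

theorem ae_ae_norm_le_of_eLpNorm_top_le [MeasurableSpace E] [OpensMeasurableSpace E]
    [SFinite ν] [SFinite μ] {F : β → X → E} (hF : Measurable (uncurry F)) {M : β → ℝ}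
    (hM : Measurable M) (h : ∀ᵐ t ∂ν, 0 ≤ M t ∧ eLpNorm (F t) ∞ μ ≤ ENNReal.ofReal (M t)) :
    ∀ᵐ x ∂μ, ∀ᵐ t ∂ν, ‖F t x‖ ≤ M t := by
  rw [Measure.ae_ae_comm (p := fun x t => ‖F t x‖ ≤ M t)
    (measurableSet_le (hF.comp measurable_swap).norm (hM.comp measurable_snd))]
  filter_upwards [h] with t ⟨hM0, ht⟩
  filter_upwards [ae_le_eLpNormEssSup (f := F t) (μ := μ)] with x hx
  rw [eLpNorm_exponent_top] at ht
  rw [← ENNReal.ofReal_le_ofReal_iff hM0, ofReal_norm]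
  exact hx.trans ht

variable [NormedSpace ℝ E]

theorem enorm_integral_rpow_le_measure_univ_mul (hp : 1 ≤ p) (hp_top : p ≠ ∞) {f : β → E}
    (hf : AEStronglyMeasurable f ν) :
    ‖∫ t, f t ∂ν‖ₑ ^ p.toReal ≤ ν univ ^ (p.toReal - 1) * ∫⁻ t, ‖f t‖ₑ ^ p.toReal ∂ν := by
  have hr : 0 < p.toReal := ENNReal.toReal_pos (by positivity) hp_top
  have holder := eLpNorm_le_eLpNorm_mul_rpow_measure_univ hp hf
  rw [eLpNorm_one_eq_lintegral_enorm, eLpNorm_eq_eLpNorm' (by positivity) hp_top,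
    ENNReal.toReal_one] at holder
  calc ‖∫ t, f t ∂ν‖ₑ ^ p.toReal
      ≤ (eLpNorm' f p.toReal ν * ν univ ^ (1 / 1 - 1 / p.toReal)) ^ p.toReal := by
        gcongr
        exact (enorm_integral_le_lintegral_enorm f).trans holder
    _ = ν univ ^ (p.toReal - 1) * ∫⁻ t, ‖f t‖ₑ ^ p.toReal ∂ν := by
        rw [lintegral_rpow_enorm_eq_rpow_eLpNorm' hr, ENNReal.mul_rpow_of_nonneg _ _ hr.le,
          ← ENNReal.rpow_mul, mul_comm]
        congr 2
        field_simp

theorem eLpNorm_integral_le_measure_univ_mul [SFinite ν] [SFinite μ] (hp : 1 ≤ p)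
    (hp_top : p ≠ ∞) {F : β → X → E} (hF : StronglyMeasurable (uncurry F)) {A : ℝ≥0∞}
    (hA : ∀ᵐ t ∂ν, eLpNorm (F t) p μ ≤ A) :
    eLpNorm (fun x => ∫ t, F t x ∂ν) p μ ≤ ν univ * A := by
  have hr : 0 < p.toReal := ENNReal.toReal_pos (by positivity) hp_top
  suffices ∫⁻ x, ‖∫ t, F t x ∂ν‖ₑ ^ p.toReal ∂μ ≤ (ν univ * A) ^ p.toReal by
    rw [eLpNorm_eq_lintegral_rpow_enorm_toReal (by positivity) hp_top, one_div,
      ENNReal.rpow_inv_le_iff hr]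
    exact this
  have hFx : ∀ x, AEStronglyMeasurable (fun t => F t x) ν := fun x =>
    (hF.comp_measurable (measurable_id.prodMk measurable_const)).aestronglyMeasurable
  calc ∫⁻ x, ‖∫ t, F t x ∂ν‖ₑ ^ p.toReal ∂μ
      ≤ ∫⁻ x, ν univ ^ (p.toReal - 1) * ∫⁻ t, ‖F t x‖ₑ ^ p.toReal ∂ν ∂μ :=
        lintegral_mono fun x => enorm_integral_rpow_le_measure_univ_mul hp hp_top (hFx x)
    _ = ν univ ^ (p.toReal - 1) * ∫⁻ t, eLpNorm (F t) p μ ^ p.toReal ∂ν := by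
        have hFm : Measurable fun z : β × X => ‖F z.1 z.2‖ₑ ^ p.toReal :=
          hF.enorm.pow_const _
        have hswap := lintegral_lintegral_swap (μ := μ) (ν := ν)
          (f := fun x t => ‖F t x‖ₑ ^ p.toReal) (hFm.comp measurable_swap).aemeasurable
        rw [lintegral_const_mul _ (hFm.lintegral_prod_left' (μ := ν)), hswap]
        congr 1
        refine lintegral_congr fun t => ?_
        rw [eLpNorm_eq_eLpNorm' (by positivity) hp_top, lintegral_rpow_enorm_eq_rpow_eLpNorm' hr]
    _ ≤ ν univ ^ (p.toReal - 1) * ∫⁻ _, A ^ p.toReal ∂ν :=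
        mul_le_mul_right (lintegral_mono_ae (hA.mono fun t ht => by gcongr)) _
    _ = (ν univ * A) ^ p.toReal := by
        have h1 : 0 ≤ p.toReal - 1 := by
          rw [sub_nonneg, ← ENNReal.toReal_one]
          exact ENNReal.toReal_mono hp_top hp
        rw [lintegral_const, ENNReal.mul_rpow_of_nonneg _ _ hr.le, mul_comm _ (ν univ),
          ← mul_assoc]
        congr 1
        simpa using (ENNReal.rpow_add_of_nonneg (x := ν univ) _ _ h1 zero_le_one).symm

theorem setIntegral_Ioi_eq_add {f : ℝ → E} {a b : ℝ} (hf : IntegrableOn f (Ioi a))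
    (hab : a ≤ b) :
    ∫ t in Ioi a, f t = (∫ t in Ioc a b, f t) + ∫ t in Ioi b, f t := by
  rw [← Ioc_union_Ioi_eq_Ioi hab] at hf ⊢
  exact setIntegral_union Ioc_disjoint_Ioi_same measurableSet_Ioi (hf.mono_set subset_union_left)
    (hf.mono_set subset_union_right)

theorem norm_setIntegral_Ioi_le_of_norm_le_rpow {f : ℝ → E} {τ γ K : ℝ} (hτ : 0 < τ)
    (hγ : 0 < γ) (hf : ∀ᵐ t ∂volume.restrict (Ioi τ), ‖f t‖ ≤ K * t ^ (-1 - γ)) :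
    ‖∫ t in Ioi τ, f t‖ ≤ K * τ ^ (-γ) / γ := by
  have hint : IntegrableOn (fun t => K * t ^ (-1 - γ)) (Ioi τ) :=
    (integrableOn_Ioi_rpow_of_lt (by linarith) hτ).const_mul K
  refine (norm_integral_le_of_norm_le hint hf).trans_eq ?_
  rw [integral_const_mul, integral_Ioi_rpow_of_lt (by linarith) hτ, show -1 - γ + 1 = -γ by ring]
  field_simp

end

noncomputable def invSqrtMeasure (τ : ℝ) : Measure ℝ :=
  (volume.restrict (Ioc 0 τ)).withDensity fun t => ENNReal.ofReal (t ^ (-(1 : ℝ) / 2))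

instance (τ : ℝ) : SFinite (invSqrtMeasure τ) := by
  unfold invSqrtMeasure; infer_instance

theorem ae_invSqrtMeasure_pos (τ : ℝ) : ∀ᵐ t ∂invSqrtMeasure τ, 0 < t :=
  (withDensity_absolutelyContinuous _ _).ae_le
    ((ae_restrict_mem measurableSet_Ioc).mono fun _ ht => ht.1)

theorem integral_invSqrtMeasure {E : Type*} [NormedAddCommGroup E] [NormedSpace ℝ E] (τ : ℝ)
    (f : ℝ → E) :
    ∫ t, f t ∂invSqrtMeasure τ = ∫ t in Ioc 0 τ, t ^ (-(1 : ℝ) / 2) • f t := by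
  rw [invSqrtMeasure, integral_withDensity_eq_integral_toReal_smul (by fun_prop)
    (ae_of_all _ fun _ => ENNReal.ofReal_lt_top)]
  refine setIntegral_congr_fun measurableSet_Ioc fun t ht => ?_
  rw [ENNReal.toReal_ofReal (rpow_nonneg ht.1.le _)]

theorem invSqrtMeasure_univ {τ : ℝ} (hτ : 0 ≤ τ) :
    invSqrtMeasure τ univ = ENNReal.ofReal (2 * τ ^ (1 / 2 : ℝ)) := by
  have hint : IntegrableOn (fun t : ℝ => t ^ (-(1 : ℝ) / 2)) (Ioc 0 τ) := by
    rw [← intervalIntegrable_iff_integrableOn_Ioc_of_le hτ]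
    exact intervalIntegral.intervalIntegrable_rpow' (by norm_num)
  rw [invSqrtMeasure, withDensity_apply _ MeasurableSet.univ, Measure.restrict_univ,
    ← ofReal_integral_eq_lintegral_ofReal hint
      ((ae_restrict_mem measurableSet_Ioc).mono fun t ht => rpow_nonneg ht.1.le _),
    ← intervalIntegral.integral_of_le hτ, integral_rpow (Or.inl (by norm_num))]
  congr 1
  norm_num
  ring

section HeadTail

variable {X : Type*} [MeasurableSpace X] {μ : Measure X} [SFinite μ] {F : ℝ → X → ℝ}

theorem eLpNorm_setIntegral_Ioc_le (hF : Measurable (uncurry F)) {τ : ℝ} (hτ : 0 ≤ τ)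
    {p : ℝ≥0∞} (hp : 1 ≤ p) (hp_top : p ≠ ∞) {A : ℝ≥0∞} (hA : ∀ t > 0, eLpNorm (F t) p μ ≤ A) :
    eLpNorm (fun x => ∫ t in Ioc 0 τ, t ^ (-(1 : ℝ) / 2) * F t x) p μ ≤
      ENNReal.ofReal (2 * τ ^ (1 / 2 : ℝ)) * A := by
  have hF_int : (fun x => ∫ t in Ioc 0 τ, t ^ (-(1 : ℝ) / 2) * F t x) =
      fun x => ∫ t, F t x ∂invSqrtMeasure τ :=
    funext fun x => (integral_invSqrtMeasure τ _).symm
  rw [hF_int, ← invSqrtMeasure_univ hτ]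
  exact eLpNorm_integral_le_measure_univ_mul hp hp_top hF.stronglyMeasurable
    ((ae_invSqrtMeasure_pos τ).mono hA)

theorem ae_abs_setIntegral_Ioi_le (hF : Measurable (uncurry F)) {τ γ K : ℝ} (hτ : 0 < τ)
    (hγ : 0 < γ) (hK : 0 ≤ K)
    (hF_top : ∀ t > 0, eLpNorm (F t) ∞ μ ≤ ENNReal.ofReal (K * t ^ (-(1 : ℝ) / 2 - γ))) :
    ∀ᵐ x ∂μ, |∫ t in Ioi τ, t ^ (-(1 : ℝ) / 2) * F t x| ≤ K * τ ^ (-γ) / γ := by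
  have hbound : ∀ᵐ t ∂volume.restrict (Ioi τ), 0 ≤ K * t ^ (-(1 : ℝ) / 2 - γ) ∧
      eLpNorm (F t) ∞ μ ≤ ENNReal.ofReal (K * t ^ (-(1 : ℝ) / 2 - γ)) := by
    filter_upwards [ae_restrict_mem measurableSet_Ioi] with t ht
    exact ⟨mul_nonneg hK (rpow_nonneg (hτ.trans ht).le _), hF_top t (hτ.trans ht)⟩
  filter_upwards [ae_ae_norm_le_of_eLpNorm_top_le hF (by fun_prop) hbound] with x hx
  rw [← Real.norm_eq_abs]
  refine norm_setIntegral_Ioi_le_of_norm_le_rpow hτ hγ ?_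
  filter_upwards [hx, ae_restrict_mem measurableSet_Ioi] with t hFt ht
  have ht0 : 0 < t := hτ.trans ht
  calc ‖t ^ (-(1 : ℝ) / 2) * F t x‖ = t ^ (-(1 : ℝ) / 2) * ‖F t x‖ := by
        rw [norm_mul, Real.norm_of_nonneg (rpow_nonneg ht0.le _)]
    _ ≤ t ^ (-(1 : ℝ) / 2) * (K * t ^ (-(1 : ℝ) / 2 - γ)) := by gcongr
    _ = K * t ^ (-1 - γ) := by
        rw [mul_left_comm, ← rpow_add ht0]
        ring_nf

end HeadTail

theorem measure_lt_abs_le_of_ae_eq_add {X : Type*} [MeasurableSpace X] {μ : Measure X}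
    {f g h : X → ℝ} (hfgh : f =ᵐ[μ] g + h) (hg : AEStronglyMeasurable g μ) {l : ℝ} (hl : 0 < l)
    (hh : ∀ᵐ x ∂μ, |h x| ≤ l / 2) {p : ℝ≥0∞} (hp : p ≠ 0) (hp_top : p ≠ ∞) :
    μ {x | l < |f x|} ≤ (ENNReal.ofReal (l / 2))⁻¹ ^ p.toReal * eLpNorm g p μ ^ p.toReal := by
  refine (measure_mono_ae ?_).trans (meas_ge_le_mul_pow_eLpNorm_enorm μ hp hp_top hg
    (ENNReal.ofReal_pos.2 (half_pos hl)).ne' (by simp))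
  filter_upwards [hfgh, hh] with x hfx hhx hlx
  change l < |f x| at hlx
  change ENNReal.ofReal (l / 2) ≤ ‖g x‖ₑ
  rw [← ofReal_norm, Real.norm_eq_abs]
  refine ENNReal.ofReal_le_ofReal ?_
  rw [hfx, Pi.add_apply] at hlx
  linarith [abs_add_le (g x) (h x)]

theorem exists_exponent_gap {n q p : ℝ} (hq : 0 < q) (hqn : q < n)
    (hp : 1 / p = 1 / q - 1 / n) :
    ∃ γ > 0, -n / (2 * q) = -(1 : ℝ) / 2 - γ ∧ p = q + q / (2 * γ) := by
  have hn : 0 < n := hq.trans hqn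
  have hnq : 0 < n - q := by linarith
  refine ⟨(n - q) / (2 * q), by positivity, by field_simp; ring, ?_⟩
  rw [← one_div_one_div p, hp]
  field_simp
  ring

-- Where the constant comes from: for `τ = (D N / l) ^ (1 / γ)`, Chebyshev's bound for the head
-- is `(C N / l) ^ p` with `C = (4 D ^ (1 / (2 γ))) ^ (q / p)`.
theorem weak_type_constant_eq {D γ q p l N : ℝ} (hD : 0 < D) (hγ : 0 < γ) (hl : 0 < l)
    (hN : 0 < N) (hq : 0 < q) (hp : p = q + q / (2 * γ)) :
    (ENNReal.ofReal (l / 2))⁻¹ ^ q *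
        (ENNReal.ofReal (2 * ((D * (N / l)) ^ (1 / γ)) ^ (1 / 2 : ℝ)) * ENNReal.ofReal N) ^ q =
      ENNReal.ofReal (((4 * D ^ (1 / (2 * γ))) ^ (q / p) * N / l) ^ p) := by
  have hx : 0 < N / l := by positivity
  have hp0 : p ≠ 0 := by rw [hp]; positivity
  rw [← ENNReal.ofReal_inv_of_pos (by positivity), ← ENNReal.ofReal_mul (by positivity),
    ← ENNReal.mul_rpow_of_nonneg _ _ hq.le, ← ENNReal.ofReal_mul (by positivity),
    ENNReal.ofReal_rpow_of_nonneg (by positivity) hq.le, mul_div_assoc _ N]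
  congr 1
  have hsqrt : ((D * (N / l)) ^ (1 / γ)) ^ (1 / 2 : ℝ) * (N / l) =
      D ^ (1 / (2 * γ)) * (N / l) ^ (1 + 1 / (2 * γ)) := by
    rw [← rpow_mul (by positivity), mul_rpow hD.le hx.le, rpow_add hx, rpow_one]
    ring_nf
  rw [show (l / 2)⁻¹ * (2 * ((D * (N / l)) ^ (1 / γ)) ^ (1 / 2 : ℝ) * N) =
      4 * (((D * (N / l)) ^ (1 / γ)) ^ (1 / 2 : ℝ) * (N / l)) by field_simp; ring,
    hsqrt, ← mul_assoc, mul_rpow (by positivity) (by positivity), ← rpow_mul hx.le,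
    mul_rpow (by positivity) hx.le, ← rpow_mul (by positivity), div_mul_cancel₀ _ hp0, hp]
  ring_nf

theorem weak_type_subordinated_general (n q p c : ℝ) (hq : 1 < q)
    (hqn : q < n) (hp : 1 / p = 1 / q - 1 / n) (hc : 0 < c) :
    ∃ C > 0, ∀ (X : Type u) [MeasurableSpace X] (μ : Measure X), SigmaFinite μ →
      ∀ T : ℝ → (X → ℝ) → (X → ℝ),
      (∀ t > (0 : ℝ), ∀ u : X → ℝ, MemLp u (ENNReal.ofReal q) μ →
        Measurable (T t u)) →
      (∀ t > (0 : ℝ), ∀ u v : X → ℝ, MemLp u (ENNReal.ofReal q) μ →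
        MemLp v (ENNReal.ofReal q) μ → T t (u + v) =ᵐ[μ] T t u + T t v) →
      (∀ t > (0 : ℝ), ∀ (a : ℝ) (u : X → ℝ), MemLp u (ENNReal.ofReal q) μ →
        T t (a • u) =ᵐ[μ] a • T t u) →
      (∀ s > (0 : ℝ), ∀ t > (0 : ℝ), ∀ u : X → ℝ, MemLp u (ENNReal.ofReal q) μ →
        T (t + s) u =ᵐ[μ] T s (T t u)) →
      (∀ t > (0 : ℝ), ∀ u : X → ℝ, MemLp u (ENNReal.ofReal q) μ →
        eLpNorm (T t u) (ENNReal.ofReal q) μ ≤ eLpNorm u (ENNReal.ofReal q) μ) →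
      (∀ t > (0 : ℝ), ∀ u : X → ℝ, MemLp u (ENNReal.ofReal q) μ →
        eLpNorm (T t u) ∞ μ ≤
          ENNReal.ofReal (c * t ^ (-n / (2 * q))) * eLpNorm u (ENNReal.ofReal q) μ) →
      (∀ u : X → ℝ, MemLp u (ENNReal.ofReal q) μ →
        Measurable (fun pr : ℝ × X => T pr.1 u pr.2)) →
      (∀ u : X → ℝ, MemLp u (ENNReal.ofReal q) μ →
        ∀ᵐ x ∂μ, IntegrableOn (fun t => t ^ (-(1 : ℝ) / 2) * T t u x) (Set.Ioi 0)) →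
      ∀ u : X → ℝ, MemLp u (ENNReal.ofReal q) μ → ¬ u =ᵐ[μ] 0 →
      ∀ l : ℝ, 0 < l →
        μ {x | l < |∫ t in Set.Ioi (0 : ℝ), t ^ (-(1 : ℝ) / 2) * T t u x|} ≤
          ENNReal.ofReal ((C * (eLpNorm u (ENNReal.ofReal q) μ).toReal / l) ^ p) := by
  have hq0 : 0 < q := by linarith
  obtain ⟨γ, hγ, hexp, hpγ⟩ := exists_exponent_gap hq0 hqn hp
  refine ⟨(4 * (2 * c / γ) ^ (1 / (2 * γ))) ^ (q / p), by positivity, ?_⟩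
  intro X _ μ _ T _ _ _ _ hLq hLinf hjm hint u hu hu0 l hl
  set N := (eLpNorm u (ENNReal.ofReal q) μ).toReal
  have hNeq : eLpNorm u (ENNReal.ofReal q) μ = ENNReal.ofReal N :=
    (ENNReal.ofReal_toReal hu.eLpNorm_ne_top).symm
  have hN : 0 < N := ENNReal.toReal_pos
    (by rwa [Ne, eLpNorm_eq_zero_iff hu.1 (by simpa using hq0)]) hu.eLpNorm_ne_top
  set τ := (2 * c / γ * (N / l)) ^ (1 / γ)
  have hτ : 0 < τ := by positivity
  have htail := ae_abs_setIntegral_Ioi_le (hjm u hu) hτ hγ (K := c * N) (by positivity)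
    fun t ht => by
      rw [← hexp, mul_right_comm, ENNReal.ofReal_mul (by positivity), ← hNeq]
      exact hLinf t ht u hu
  have htail_eq : c * N * τ ^ (-γ) / γ = l / 2 := by
    rw [← rpow_mul (by positivity), show 1 / γ * -γ = -1 by field_simp, rpow_neg_one]
    field_simp
  have hhead := eLpNorm_setIntegral_Ioc_le (hjm u hu) hτ.le (p := ENNReal.ofReal q)
    (by simpa using hq.le) ENNReal.ofReal_ne_top fun t ht => hLq t ht u hu
  rw [hNeq] at hhead
  have hhead_meas : AEStronglyMeasurable
      (fun x => ∫ t in Ioc 0 τ, t ^ (-(1 : ℝ) / 2) * T t u x) μ :=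
    ((measurable_fst.pow_const _).mul (hjm u hu)).stronglyMeasurable.integral_prod_left'
      |>.aestronglyMeasurable
  calc _ ≤ _ := measure_lt_abs_le_of_ae_eq_add
        ((hint u hu).mono fun x hx => setIntegral_Ioi_eq_add hx hτ.le) hhead_meas hl
        (htail_eq ▸ htail) (by simpa using hq0) ENNReal.ofReal_ne_top
    _ ≤ _ := by rw [ENNReal.toReal_ofReal hq0.le]; gcongr
    _ = _ := weak_type_constant_eq (by positivity) hγ hl hN hq0 hpγ

/-- Weak type `(q, p)` bound for the subordinated operator
`S u (x) = ∫_0^∞ t^(-1/2) (T_t u)(x) dt` built from a semigroup `(T_t)` of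
linear operators on `L^q(μ)` which is a contraction on `L^q` and satisfies the
ultracontractive bound `‖T_t u‖_∞ ≤ c t^(-n/(2q)) ‖u‖_q`.  The constant `C`
depends only on `c`, `n` and `q`. -/
theorem weak_type_subordinated (n q p c : ℝ) (hn : 0 < n) (hq : 1 < q)
    (hqn : q < n) (hp : 1 / p = 1 / q - 1 / n) (hc : 0 < c) :
    ∃ C > 0, ∀ (X : Type u) [MeasurableSpace X] (μ : Measure X), SigmaFinite μ →
      ∀ T : ℝ → (X → ℝ) → (X → ℝ),
      (∀ t > (0 : ℝ), ∀ u : X → ℝ, MemLp u (ENNReal.ofReal q) μ →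
        Measurable (T t u)) →
      (∀ t > (0 : ℝ), ∀ u v : X → ℝ, MemLp u (ENNReal.ofReal q) μ →
        MemLp v (ENNReal.ofReal q) μ → T t (u + v) =ᵐ[μ] T t u + T t v) →
      (∀ t > (0 : ℝ), ∀ (a : ℝ) (u : X → ℝ), MemLp u (ENNReal.ofReal q) μ →
        T t (a • u) =ᵐ[μ] a • T t u) →
      (∀ s > (0 : ℝ), ∀ t > (0 : ℝ), ∀ u : X → ℝ, MemLp u (ENNReal.ofReal q) μ →
        T (t + s) u =ᵐ[μ] T s (T t u)) →
      (∀ t > (0 : ℝ), ∀ u : X → ℝ, MemLp u (ENNReal.ofReal q) μ →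
        eLpNorm (T t u) (ENNReal.ofReal q) μ ≤ eLpNorm u (ENNReal.ofReal q) μ) →
      (∀ t > (0 : ℝ), ∀ u : X → ℝ, MemLp u (ENNReal.ofReal q) μ →
        eLpNorm (T t u) ∞ μ ≤
          ENNReal.ofReal (c * t ^ (-n / (2 * q))) * eLpNorm u (ENNReal.ofReal q) μ) →
      (∀ u : X → ℝ, MemLp u (ENNReal.ofReal q) μ →
        Measurable (fun pr : ℝ × X => T pr.1 u pr.2)) →
      (∀ u : X → ℝ, MemLp u (ENNReal.ofReal q) μ →
        ∀ᵐ x ∂μ, IntegrableOn (fun t => t ^ (-(1 : ℝ) / 2) * T t u x) (Set.Ioi 0)) →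
      ∀ u : X → ℝ, MemLp u (ENNReal.ofReal q) μ → ¬ u =ᵐ[μ] 0 →
      ∀ l : ℝ, 0 < l →
        μ {x | l < |∫ t in Set.Ioi (0 : ℝ), t ^ (-(1 : ℝ) / 2) * T t u x|} ≤
          ENNReal.ofReal ((C * (eLpNorm u (ENNReal.ofReal q) μ).toReal / l) ^ p) :=
  weak_type_subordinated_general n q p c hq hqn hp hc
end

section
/- Let n ≥ 2 and 1 < q < n be real numbers, let A > 0, and let V : (0, 1] → ℝ be a nondecreasing function with V(r) > 0 for all r ∈ (0, 1]. Suppose that V(r) ≥ (r / (4√2 · A))^{nq/(n+q)} · V(r/2)^{n/(n+q)} for all r ∈ (0, 1], and that there exist ε > 0 and m > 0 with V(s) ≥ ε s^m for all s ∈ (0, 1]. Then V(r) ≥ (1 / (2^{(n + 5q/2)/q} · A))^n · r^n for all r ∈ (0, 1]. -/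
/-!
Taking logarithms, the excess `ℓ(r) = log V(r) - n log(K r)` of `V` over the Euclidean profile
`(K r)^n` satisfies `θ ℓ(r/2) ≤ ℓ(r)` with `θ = n/(n+q) < 1`, because `K` is chosen as the fixed
point of the recursion. Iterating gives `θ^k ℓ(r/2^k) ≤ ℓ(r)`, while the crude bound
`V(s) ≥ ε s^m` makes `ℓ(r/2^k)` at least affine in `k`; since `θ^k k → 0`, `ℓ(r) ≥ 0`.
-/

open Real Set Filter

theorem pow_mul_le_of_mul_succ_le {θ : ℝ} {u : ℕ → ℝ} (hθ : 0 ≤ θ)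
    (h : ∀ k, θ * u (k + 1) ≤ u k) (k : ℕ) : θ ^ k * u k ≤ u 0 := by
  induction k with
  | zero => simp
  | succ k ih =>
    calc θ ^ (k + 1) * u (k + 1) = θ ^ k * (θ * u (k + 1)) := by ring
      _ ≤ θ ^ k * u k := mul_le_mul_of_nonneg_left (h k) (pow_nonneg hθ k)
      _ ≤ u 0 := ih

theorem nonneg_of_mul_succ_le_of_affine_le {θ a b : ℝ} {u : ℕ → ℝ} (hθ0 : 0 ≤ θ) (hθ1 : θ < 1)
    (h : ∀ k, θ * u (k + 1) ≤ u k) (hlow : ∀ k : ℕ, a + b * k ≤ u k) : 0 ≤ u 0 := by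
  have htend : Tendsto (fun k : ℕ => θ ^ k * (a + b * k)) atTop (nhds 0) := by
    have ha := (tendsto_pow_atTop_nhds_zero_of_lt_one hθ0 hθ1).const_mul a
    have hb := (tendsto_self_mul_const_pow_of_lt_one hθ0 hθ1).const_mul b
    simpa only [mul_zero, add_zero, mul_add, mul_comm, mul_left_comm] using ha.add hb
  exact le_of_tendsto' htend fun k =>
    (mul_le_mul_of_nonneg_left (hlow k) (pow_nonneg hθ0 k)).trans (pow_mul_le_of_mul_succ_le hθ0 h k)

noncomputable def logExcess (d K : ℝ) (V : ℝ → ℝ) (s : ℝ) : ℝ :=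
  log (V s) - d * log (K * s)

section logExcess

variable {θ d B K : ℝ} {V : ℝ → ℝ}

theorem mul_logExcess_half_le {s : ℝ} (hs : 0 < s) (hB : 0 < B) (hK : 0 < K)
    (hfix : (1 - θ) * (log B + log K) + θ * log 2 = 0)
    (hVs2 : 0 < V (s / 2))
    (hrec : (s / B) ^ (d * (1 - θ)) * V (s / 2) ^ θ ≤ V s) :
    θ * logExcess d K V (s / 2) ≤ logExcess d K V s := by
  have hlog := log_le_log (by positivity) hrec
  rw [log_mul (by positivity) (by positivity), log_rpow (by positivity), log_rpow hVs2,
    log_div hs.ne' hB.ne'] at hlog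
  simp only [logExcess]
  rw [log_mul hK.ne' hs.ne', log_mul hK.ne' (by positivity), log_div hs.ne' two_ne_zero]
  linear_combination hlog + d * hfix

theorem affine_le_logExcess {ε m s : ℝ} (hε : 0 < ε) (hs : 0 < s) (hK : 0 < K)
    (hlow : ε * s ^ m ≤ V s) :
    log ε + (m - d) * log s - d * log K ≤ logExcess d K V s := by
  have hlog := log_le_log (by positivity) hlow
  rw [log_mul hε.ne' (by positivity), log_rpow hs] at hlog
  simp only [logExcess]
  rw [log_mul hK.ne' hs.ne']
  linarith

theorem rpow_mul_rpow_le_of_logExcess_nonneg {r : ℝ} (hr : 0 < r) (hK : 0 < K) (hVr : 0 < V r)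
    (h : 0 ≤ logExcess d K V r) : K ^ d * r ^ d ≤ V r := by
  rw [← mul_rpow hK.le hr.le, ← log_le_log_iff (by positivity) hVr, log_rpow (by positivity)]
  simp only [logExcess] at h
  linarith

end logExcess

theorem dyadic_mem_Ioc {r : ℝ} (hr : r ∈ Ioc (0 : ℝ) 1) (k : ℕ) : r / 2 ^ k ∈ Ioc (0 : ℝ) 1 :=
  ⟨by have := hr.1; positivity,
    (div_le_self hr.1.le (one_le_pow₀ one_le_two)).trans hr.2⟩

theorem rpow_mul_rpow_le_of_recursive_le {θ d B ε m : ℝ} {V : ℝ → ℝ}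
    (hθ0 : 0 ≤ θ) (hθ1 : θ < 1) (hB : 0 < B) (hpos : ∀ r ∈ Ioc (0 : ℝ) 1, 0 < V r)
    (hrec : ∀ r ∈ Ioc (0 : ℝ) 1, (r / B) ^ (d * (1 - θ)) * V (r / 2) ^ θ ≤ V r)
    (hε : 0 < ε) (hlow : ∀ s ∈ Ioc (0 : ℝ) 1, ε * s ^ m ≤ V s) :
    ∀ r ∈ Ioc (0 : ℝ) 1, (B * 2 ^ (θ / (1 - θ)))⁻¹ ^ d * r ^ d ≤ V r := by
  intro r hr
  set K := (B * 2 ^ (θ / (1 - θ)))⁻¹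
  have hK : 0 < K := by positivity
  have hfix : (1 - θ) * (log B + log K) + θ * log 2 = 0 := by
    rw [log_inv, log_mul hB.ne' (by positivity), log_rpow two_pos]
    field_simp [(sub_pos.2 hθ1).ne']
    ring
  have hu : ∀ k : ℕ, θ * logExcess d K V (r / 2 ^ (k + 1)) ≤ logExcess d K V (r / 2 ^ k) := by
    intro k
    have hs := dyadic_mem_Ioc hr k
    have hhalf : r / 2 ^ k / 2 = r / 2 ^ (k + 1) := by rw [pow_succ, div_div]
    rw [← hhalf]
    exact mul_logExcess_half_le hs.1 hB hK hfix (hhalf ▸ hpos _ (dyadic_mem_Ioc hr _))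
      (hrec _ hs)
  have hlowk : ∀ k : ℕ, (log ε + (m - d) * log r - d * log K) + (d - m) * log 2 * k
      ≤ logExcess d K V (r / 2 ^ k) := by
    intro k
    have hs := dyadic_mem_Ioc hr k
    have h := affine_le_logExcess (d := d) hε hs.1 hK (hlow _ hs)
    rw [log_div hr.1.ne' (by positivity), log_pow] at h
    linarith
  have h0 := nonneg_of_mul_succ_le_of_affine_le hθ0 hθ1 hu hlowk
  simp only [pow_zero, div_one] at h0
  exact rpow_mul_rpow_le_of_logExcess_nonneg hr.1 hK (hpos r hr) h0

theorem four_mul_sqrt_two : 4 * √2 = (2 : ℝ) ^ (5 / 2 : ℝ) := by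
  rw [sqrt_eq_rpow, show (5 / 2 : ℝ) = 2 + 1 / 2 by norm_num, rpow_add two_pos]
  norm_num

theorem volume_iteration_general (n q A : ℝ) (hq1 : 1 < q) (hqn : q < n)
    (hA : 0 < A) (V : ℝ → ℝ)
    (hpos : ∀ r ∈ Set.Ioc (0 : ℝ) 1, 0 < V r)
    (hrec : ∀ r ∈ Set.Ioc (0 : ℝ) 1,
      (r / (4 * Real.sqrt 2 * A)) ^ (n * q / (n + q)) * V (r / 2) ^ (n / (n + q)) ≤ V r)
    (hlow : ∃ ε > (0 : ℝ), ∃ m > (0 : ℝ), ∀ s ∈ Set.Ioc (0 : ℝ) 1, ε * s ^ m ≤ V s) :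
    ∀ r ∈ Set.Ioc (0 : ℝ) 1,
      (1 / (2 ^ ((n + 5 * q / 2) / q) * A)) ^ n * r ^ n ≤ V r := by
  obtain ⟨ε, hε, m, -, hlow⟩ := hlow
  have hq : 0 < q := by linarith
  have hnq : 0 < n + q := by linarith
  have hθ0 : 0 ≤ n / (n + q) := div_nonneg (by linarith) hnq.le
  have hθ1 : n / (n + q) < 1 := (div_lt_one hnq).2 (by linarith)
  have hexp : n * q / (n + q) = n * (1 - n / (n + q)) := by field_simp; ring
  have hratio : n / (n + q) / (1 - n / (n + q)) = n / q := by
    rw [one_sub_div hnq.ne', add_sub_cancel_left, div_div_div_cancel_right₀ hnq.ne']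
  have hconst : 1 / (2 ^ ((n + 5 * q / 2) / q) * A)
      = (4 * √2 * A * 2 ^ (n / (n + q) / (1 - n / (n + q))))⁻¹ := by
    rw [hratio, four_mul_sqrt_two, one_div, mul_right_comm, ← rpow_add two_pos]
    congr 3
    field_simp
    ring
  rw [hconst]
  refine rpow_mul_rpow_le_of_recursive_le hθ0 hθ1 (by positivity) hpos ?_ hε hlow
  simpa only [hexp] using hrec

/-- Iteration lemma for κ-noncollapsing: a positive nondecreasing function
`V` on `(0,1]` satisfying the recursive inequality
`V(r) ≥ (r/(4√2 A))^(nq/(n+q)) V(r/2)^(n/(n+q))` and a crude lower bound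
`V(s) ≥ ε s^m` obeys the Euclidean-type bound
`V(r) ≥ (2^(-(n+5q/2)/q) / A)^n r^n`. -/
theorem volume_iteration (n q A : ℝ) (hn : 2 ≤ n) (hq1 : 1 < q) (hqn : q < n)
    (hA : 0 < A) (V : ℝ → ℝ)
    (hmono : ∀ r ∈ Set.Ioc (0 : ℝ) 1, ∀ s ∈ Set.Ioc (0 : ℝ) 1, r ≤ s → V r ≤ V s)
    (hpos : ∀ r ∈ Set.Ioc (0 : ℝ) 1, 0 < V r)
    (hrec : ∀ r ∈ Set.Ioc (0 : ℝ) 1,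
      (r / (4 * Real.sqrt 2 * A)) ^ (n * q / (n + q)) * V (r / 2) ^ (n / (n + q)) ≤ V r)
    (hlow : ∃ ε > (0 : ℝ), ∃ m > (0 : ℝ), ∀ s ∈ Set.Ioc (0 : ℝ) 1, ε * s ^ m ≤ V s) :
    ∀ r ∈ Set.Ioc (0 : ℝ) 1,
      (1 / (2 ^ ((n + 5 * q / 2) / q) * A)) ^ n * r ^ n ≤ V r :=
  volume_iteration_general n q A hq1 hqn hA V hpos hrec hlow
end
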